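/- Let z_n → z strongly in Y and suppose S : U → Y is weak-to-weak continuous. Then the functionals E^{z_n}(u) = (1/2)‖S(u) − z_n‖_Y² + ∫_Ω g(u(x)) dx Γ-converge to E^z with respect to weak convergence in U; that is: (i) whenever u_n ⇀ u weakly in U, liminf_{n→∞} E^{z_n}(u_n) ≥ E^z(u), and (ii) for every u ∈ U there is a sequence u_n ⇀ u with limsup_{n→∞} E^{z_n}(u_n) ≤ E^z(u). -/

import Mathlib

open MeasureTheory Set Filter Topology

noncomputable section

abbrev Vec (k : ℕ) := EuclideanSpace ℝ (Fin k)

/-- Weak convergence of a sequence in a real inner product space. -/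
def WeakTendsto {X : Type*} [NormedAddCommGroup X] [InnerProductSpace ℝ X]
    (u : ℕ → X) (l : X) : Prop :=
  ∀ w : X, Tendsto (fun i => (inner ℝ (u i) w : ℝ)) atTop (nhds (inner ℝ l w : ℝ))

/-- Convexity for extended-real-valued functions. -/
def EConvexOn {X : Type*} [AddCommGroup X] [Module ℝ X] (g : X → EReal) : Prop :=
  ∀ x y : X, ∀ a b : ℝ, 0 ≤ a → 0 ≤ b → a + b = 1 →
    g (a • x + b • y) ≤ (a : EReal) * g x + (b : EReal) * g y

/-- Properness for extended-real-valued functions. -/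
def EProper {X : Type*} (g : X → EReal) : Prop :=
  (∃ v, g v ≠ ⊤) ∧ ∀ v, g v ≠ ⊥

open Classical in
/-- The integral functional `u ↦ ∫ g(u x) dμ`, valued in `EReal`. -/
def intG {α : Type*} [MeasurableSpace α] (μ : Measure α) {k : ℕ} (g : Vec k → EReal)
    (u : α → Vec k) : EReal :=
  if (∀ᵐ x ∂μ, g (u x) ≠ ⊤) ∧ Integrable (fun x => (g (u x)).toReal) μ
  then (((∫ x, (g (u x)).toReal ∂μ : ℝ) : EReal)) else ⊤

/-- The Tikhonov-type energy `u ↦ ½‖S u − z‖² + ∫ g(u x) dμ`. -/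
def energy {α : Type*} [MeasurableSpace α] (μ : Measure α) {k : ℕ} {Y : Type*}
    [NormedAddCommGroup Y]
    (S : Lp (Vec k) 2 μ → Y) (z : Y) (g : Vec k → EReal) (u : Lp (Vec k) 2 μ) : EReal :=
  (((1/2 : ℝ) * ‖S u - z‖^2 : ℝ) : EReal) + intG μ g (fun x => u x)

/-- The convex subdifferential of an extended-real-valued function on a real inner
product space. -/
def ESubdiff {X : Type*} [NormedAddCommGroup X] [InnerProductSpace ℝ X]
    (f : X → EReal) (u : X) : Set X :=
  {p | ∀ v, f u + ((inner ℝ p (v - u) : ℝ) : EReal) ≤ f v}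

/-- The Fenchel (Legendre–Fenchel) conjugate of an extended-real-valued function on a
real inner product space. -/
def EConj {X : Type*} [NormedAddCommGroup X] [InnerProductSpace ℝ X]
    (f : X → EReal) (p : X) : EReal :=
  ⨆ v, ((inner ℝ p v : ℝ) : EReal) - f v

/-!
Recovery sequences are constant, since `E^z(u)` depends continuously on `z`. The liminf
inequality is weak sequential lower semicontinuity of the two terms. For the fidelity term,
`S u_i - z_i` converges weakly to `S u - z`. The integrand `g` is bounded below by some `c`,
being lower semicontinuous on its compact domain `co M`, so `∫ g(u) = c |Ω| + ∫⁻ (g(u) - c)`.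
This lintegral is convex in `u`, and lower semicontinuous on `L²` by Fatou's lemma along an
a.e. convergent subsequence. Its sublevel sets are therefore closed and convex, hence weakly
sequentially closed (compare the weak limit with its projection onto the set).
-/

namespace WeakTendsto

variable {X : Type*} [NormedAddCommGroup X] [InnerProductSpace ℝ X] {u : ℕ → X} {l : X}

theorem sub_tendsto (hu : WeakTendsto u l) {v : ℕ → X} {v₀ : X} (hv : Tendsto v atTop (𝓝 v₀)) :
    WeakTendsto (fun i => u i - v i) (l - v₀) := fun w => by
  simpa only [inner_sub_left] using (hu w).sub (hv.inner tendsto_const_nhds)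

theorem mem_of_frequently_mem [CompleteSpace X] {K : Set X} (hK : Convex ℝ K)
    (hKc : IsClosed K) (hu : WeakTendsto u l) (hfreq : ∃ᶠ i in atTop, u i ∈ K) : l ∈ K := by
  obtain ⟨i₀, hi₀⟩ := hfreq.exists
  obtain ⟨v, hvK, hv⟩ := exists_norm_eq_iInf_of_complete_convex ⟨u i₀, hi₀⟩ hKc.isComplete hK l
  rw [norm_eq_iInf_iff_real_inner_le_zero hK hvK] at hv
  have hlim : Tendsto (fun i => inner ℝ (u i - v) (l - v)) atTop (𝓝 (inner ℝ (l - v) (l - v))) :=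
    by simpa only [inner_sub_left] using (hu (l - v)).sub_const (inner ℝ v (l - v))
  have hle : inner ℝ (l - v) (l - v) ≤ (0 : ℝ) :=
    isClosed_Iic.mem_of_frequently_of_tendsto
      (hfreq.mono fun i hi => by rw [real_inner_comm]; exact hv _ hi) hlim
  rwa [sub_eq_zero.mp (real_inner_self_nonpos.mp hle)]

theorem le_liminf_of_quasiconvexOn [CompleteSpace X] {β : Type*} [CompleteLinearOrder β]
    [DenselyOrdered β] {f : X → β} (hf : QuasiconvexOn ℝ univ f) (hlsc : LowerSemicontinuous f)
    (hu : WeakTendsto u l) : f l ≤ liminf (fun i => f (u i)) atTop := by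
  by_contra! hlt
  obtain ⟨b, hb, hbl⟩ := exists_between hlt
  have hmem : l ∈ {x | f x ≤ b} :=
    hu.mem_of_frequently_mem (by simpa using hf b)
      (lowerSemicontinuous_iff_isClosed_preimage.mp hlsc b)
      ((frequently_lt_of_liminf_lt (by isBoundedDefault) hb).mono fun _ hi => hi.le)
  exact (lt_of_le_of_lt hmem hbl).false

theorem half_norm_sq_le_liminf (hu : WeakTendsto u l) :
    (((1 / 2 : ℝ) * ‖l‖ ^ 2 : ℝ) : EReal) ≤
      liminf (fun i => (((1 / 2 : ℝ) * ‖u i‖ ^ 2 : ℝ) : EReal)) atTop := by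
  -- `⟪l, x⟫ - ½‖l‖²` is a weakly continuous minorant of `½‖x‖²` touching it at `x = l`.
  have hminor : ∀ x : X, inner ℝ l x - 1 / 2 * ‖l‖ ^ 2 ≤ 1 / 2 * ‖x‖ ^ 2 := fun x => by
    nlinarith [real_inner_le_norm l x, sq_nonneg (‖l‖ - ‖x‖)]
  have hlim : Tendsto (fun i => inner ℝ l (u i) - 1 / 2 * ‖l‖ ^ 2) atTop
      (𝓝 (1 / 2 * ‖l‖ ^ 2)) := by
    have := (hu l).sub_const (1 / 2 * ‖l‖ ^ 2)
    simp_rw [real_inner_comm l, real_inner_self_eq_norm_sq] at this ⊢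
    convert this using 2; ring
  rw [← (EReal.tendsto_coe.mpr hlim).liminf_eq]
  exact liminf_le_liminf (Eventually.of_forall fun i => EReal.coe_le_coe_iff.mpr (hminor _))

end WeakTendsto

open scoped ENNReal

theorem LowerSemicontinuous.exists_coe_le {E : Type*} [TopologicalSpace E] {g : E → EReal}
    (hg : LowerSemicontinuous g) (hbot : ∀ v, g v ≠ ⊥) (hdom : IsCompact {v | g v ≠ ⊤}) :
    ∃ c : ℝ, ∀ v, (c : EReal) ≤ g v := by
  rcases eq_empty_or_nonempty {v | g v ≠ ⊤} with hempty | hne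
  · exact ⟨0, fun v => by simp_all [eq_empty_iff_forall_notMem]⟩
  obtain ⟨v₀, hv₀, hmin⟩ := (hg.lowerSemicontinuousOn _).exists_isMinOn hne hdom
  refine ⟨(g v₀).toReal, fun v => ?_⟩
  rw [EReal.coe_toReal hv₀ (hbot v₀)]
  by_cases hv : g v = ⊤
  · simp [hv]
  · exact hmin hv

theorem EConvexOn.toENNReal_sub_le {E : Type*} [AddCommGroup E] [Module ℝ E] {g : E → EReal}
    (hconv : EConvexOn g) {c : ℝ} (hc : ∀ v, (c : EReal) ≤ g v) (x y : E) {a b : ℝ}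
    (ha : 0 ≤ a) (hb : 0 ≤ b) (hab : a + b = 1) :
    (g (a • x + b • y) - c).toENNReal ≤
      ENNReal.ofReal a * (g x - c).toENNReal + ENNReal.ofReal b * (g y - c).toENNReal := by
  rcases eq_or_ne (g x) ⊤ with hx | hx
  · rcases ha.eq_or_lt with rfl | ha'
    · simp [show b = 1 by linarith]
    · simp [hx, ENNReal.mul_top, ha']
  rcases eq_or_ne (g y) ⊤ with hy | hy
  · rcases hb.eq_or_lt with rfl | hb'
    · simp [show a = 1 by linarith]
    · simp [hy, ENNReal.mul_top, hb']
  have hbot : ∀ v, g v ≠ ⊥ := fun v => ((EReal.bot_lt_coe c).trans_le (hc v)).ne'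
  lift g x to ℝ using ⟨hx, hbot x⟩ with p hp
  lift g y to ℝ using ⟨hy, hbot y⟩ with q hq
  have hpc : c ≤ p := EReal.coe_le_coe_iff.mp (hp ▸ hc x)
  have hqc : c ≤ q := EReal.coe_le_coe_iff.mp (hq ▸ hc y)
  have hgxy : g (a • x + b • y) - c ≤ ((a * (p - c) + b * (q - c) : ℝ) : EReal) := by
    have h := EReal.sub_le_sub (hconv x y a b ha hb hab) (le_refl (c : EReal))
    rwa [← hp, ← hq, ← EReal.coe_mul, ← EReal.coe_mul, ← EReal.coe_add, ← EReal.coe_sub,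
      show a * p + b * q - c = a * (p - c) + b * (q - c) by linear_combination c * hab] at h
  calc (g (a • x + b • y) - c).toENNReal
      ≤ ENNReal.ofReal (a * (p - c) + b * (q - c)) :=
        (EReal.toENNReal_le_toENNReal hgxy).trans_eq (EReal.real_coe_toENNReal _)
    _ = _ := by
        rw [ENNReal.ofReal_add (by positivity) (by nlinarith), ENNReal.ofReal_mul ha,
          ENNReal.ofReal_mul hb, ← EReal.coe_sub, ← EReal.coe_sub, EReal.real_coe_toENNReal,
          EReal.real_coe_toENNReal]

theorem EReal.continuous_add_coe (r : ℝ) : Continuous fun x : EReal => x + r :=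
  continuous_iff_continuousAt.2 fun _ =>
    (EReal.continuousAt_add (Or.inr (EReal.coe_ne_bot r)) (Or.inr (EReal.coe_ne_top r))).comp
      (continuous_id.prodMk continuous_const).continuousAt

section IntegralFunctional

variable {α : Type*} [MeasurableSpace α] {μ : Measure α} {k : ℕ} {g : Vec k → EReal} {c : ℝ}

theorem intG_eq_lintegral_sub_add [IsFiniteMeasure μ] (hg : Measurable g)
    (hc : ∀ v, (c : EReal) ≤ g v) {u : α → Vec k} (hu : AEMeasurable u μ) :
    intG μ g u =
      ((∫⁻ x, (g (u x) - c).toENNReal ∂μ : ℝ≥0∞) : EReal) + ((c * μ.real univ : ℝ) : EReal) := by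
  have hFm : AEMeasurable (fun x => (g (u x) - c).toENNReal) μ := by fun_prop
  have hF_ofReal : ∀ x, g (u x) ≠ ⊤ →
      (g (u x) - c).toENNReal = ENNReal.ofReal ((g (u x)).toReal - c) := fun x hx => by
    rw [← EReal.coe_toReal hx ((EReal.bot_lt_coe c).trans_le (hc _)).ne', ← EReal.coe_sub,
      EReal.real_coe_toENNReal, EReal.toReal_coe]
  have hc_le : ∀ x, g (u x) ≠ ⊤ → c ≤ (g (u x)).toReal := fun x hx => by
    simpa using EReal.toReal_le_toReal (hc (u x)) (EReal.coe_ne_bot c) hx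
  rw [intG]
  split_ifs with h
  · obtain ⟨hfin, hint⟩ := h
    have hnonneg : 0 ≤ᵐ[μ] fun x => (g (u x)).toReal - c :=
      hfin.mono fun x hx => sub_nonneg.mpr (hc_le x hx)
    have hlint : ∫⁻ x, (g (u x) - c).toENNReal ∂μ =
        ENNReal.ofReal (∫ x, (g (u x)).toReal ∂μ - c * μ.real univ) := by
      calc ∫⁻ x, (g (u x) - c).toENNReal ∂μ = ∫⁻ x, ENNReal.ofReal ((g (u x)).toReal - c) ∂μ :=
            lintegral_congr_ae (hfin.mono hF_ofReal)
        _ = ENNReal.ofReal (∫ x, ((g (u x)).toReal - c) ∂μ) :=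
            (ofReal_integral_eq_lintegral_ofReal (hint.sub (integrable_const c)) hnonneg).symm
        _ = _ := by rw [integral_sub hint (integrable_const c), integral_const, smul_eq_mul,
              mul_comm]
    have hI : c * μ.real univ ≤ ∫ x, (g (u x)).toReal ∂μ := by
      simpa [mul_comm] using integral_mono_ae (integrable_const c) hint (hfin.mono hc_le)
    rw [hlint, EReal.coe_ennreal_ofReal, max_eq_left (sub_nonneg.mpr hI), ← EReal.coe_add,
      sub_add_cancel]
  · suffices ∫⁻ x, (g (u x) - c).toENNReal ∂μ = ⊤ by
      rw [this, EReal.coe_ennreal_top, EReal.top_add_of_ne_bot (EReal.coe_ne_bot _)]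
    by_contra hne
    have hfin : ∀ᵐ x ∂μ, g (u x) ≠ ⊤ := (ae_lt_top' hFm hne).mono fun x hx htop => by
      simp [htop] at hx
    refine h ⟨hfin, ?_⟩
    refine ((integrable_toReal_of_lintegral_ne_top hFm hne).add (integrable_const c)).congr ?_
    filter_upwards [hfin] with x hx
    rw [Pi.add_apply, hF_ofReal x hx, ENNReal.toReal_ofReal (sub_nonneg.mpr (hc_le x hx)),
      sub_add_cancel]

theorem quasiconvexOn_lintegral_comp {E : Type*} [NormedAddCommGroup E] [NormedSpace ℝ E]
    [MeasurableSpace E] [BorelSpace E] {p : ℝ≥0∞} {G : E → ℝ≥0∞}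
    (hGm : Measurable G) (hG : ∀ (x y : E) (a b : ℝ), 0 ≤ a → 0 ≤ b → a + b = 1 →
      G (a • x + b • y) ≤ ENNReal.ofReal a * G x + ENNReal.ofReal b * G y) :
    QuasiconvexOn ℝ univ fun u : Lp E p μ => ∫⁻ x, G (u x) ∂μ := by
  refine quasiconvexOn_iff_le_max.mpr ⟨convex_univ, fun u _ v _ a b ha hb hab => ?_⟩
  set m := max (∫⁻ x, G (u x) ∂μ) (∫⁻ x, G (v x) ∂μ)
  have hcomb : ∀ᵐ x ∂μ, (a • u + b • v : Lp E p μ) x = a • u x + b • v x := by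
    filter_upwards [Lp.coeFn_add (a • u) (b • v), Lp.coeFn_smul a u, Lp.coeFn_smul b v]
      with x h₁ h₂ h₃
    rw [h₁, Pi.add_apply, h₂, h₃, Pi.smul_apply, Pi.smul_apply]
  have hmeas : ∀ w : Lp E p μ, AEMeasurable (fun x => G (w x)) μ := fun w =>
    hGm.comp_aemeasurable (Lp.aestronglyMeasurable w).aemeasurable
  calc ∫⁻ x, G ((a • u + b • v : Lp E p μ) x) ∂μ
      ≤ ∫⁻ x, (ENNReal.ofReal a * G (u x) + ENNReal.ofReal b * G (v x)) ∂μ :=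
        lintegral_mono_ae (hcomb.mono fun x hx => hx ▸ hG _ _ a b ha hb hab)
    _ = ENNReal.ofReal a * ∫⁻ x, G (u x) ∂μ + ENNReal.ofReal b * ∫⁻ x, G (v x) ∂μ := by
        rw [lintegral_add_left' ((hmeas u).const_mul _), lintegral_const_mul'' _ (hmeas u),
          lintegral_const_mul'' _ (hmeas v)]
    _ ≤ ENNReal.ofReal a * m + ENNReal.ofReal b * m := by
        gcongr; exacts [le_max_left _ _, le_max_right _ _]
    _ = m := by rw [← add_mul, ← ENNReal.ofReal_add ha hb, hab, ENNReal.ofReal_one, one_mul]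

theorem lowerSemicontinuous_lintegral_comp {E : Type*} [NormedAddCommGroup E]
    [MeasurableSpace E] [BorelSpace E] {p : ℝ≥0∞} [Fact (1 ≤ p)] {G : E → ℝ≥0∞}
    (hG : LowerSemicontinuous G) :
    LowerSemicontinuous fun u : Lp E p μ => ∫⁻ x, G (u x) ∂μ := by
  refine lowerSemicontinuous_iff_isClosed_preimage.mpr fun t => IsSeqClosed.isClosed ?_
  intro U u hU hUu
  obtain ⟨ns, -, hae⟩ := (tendstoInMeasure_of_tendsto_Lp hUu).exists_seq_tendsto_ae
  calc ∫⁻ x, G (u x) ∂μ ≤ ∫⁻ x, liminf (fun j => G (U (ns j) x)) atTop ∂μ :=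
        lintegral_mono_ae (hae.mono fun x hx => (hG.le_liminf _).trans hx.liminf_le_liminf_comp)
    _ ≤ liminf (fun j => ∫⁻ x, G (U (ns j) x) ∂μ) atTop :=
        lintegral_liminf_le' fun j =>
          hG.measurable.comp_aemeasurable (Lp.aestronglyMeasurable _).aemeasurable
    _ ≤ t := liminf_le_of_frequently_le' (Frequently.of_forall fun j => hU (ns j))

theorem WeakTendsto.intG_le_liminf [IsFiniteMeasure μ] (hconv : EConvexOn g)
    (hlsc : LowerSemicontinuous g) (hc : ∀ v, (c : EReal) ≤ g v) {u : ℕ → Lp (Vec k) 2 μ}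
    {l : Lp (Vec k) 2 μ} (hu : WeakTendsto u l) :
    intG μ g (fun x => l x) ≤ liminf (fun i => intG μ g (fun x => u i x)) atTop := by
  set φ : ℝ≥0∞ → EReal := fun t => (t : EReal) + ((c * μ.real univ : ℝ) : EReal)
  have hφ : Continuous φ := (EReal.continuous_add_coe _).comp continuous_coe_ennreal_ereal
  have hφ_mono : Monotone φ := fun _ _ hst =>
    add_le_add (EReal.coe_ennreal_le_coe_ennreal_iff.mpr hst) le_rfl
  have hG : LowerSemicontinuous fun v : Vec k => (g v - c).toENNReal := by
    have h := EReal.continuous_toENNReal.comp_lowerSemicontinuous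
      ((EReal.continuous_add_coe (-c)).comp_lowerSemicontinuous hlsc
        fun _ _ h => add_le_add h le_rfl) fun _ _ h => EReal.toENNReal_le_toENNReal h
    simpa only [Function.comp_def, EReal.coe_neg, ← sub_eq_add_neg] using h
  have hrep : ∀ v : Lp (Vec k) 2 μ,
      intG μ g (fun x => v x) = φ (∫⁻ x, (g (v x) - c).toENNReal ∂μ) := fun v =>
    intG_eq_lintegral_sub_add hlsc.measurable hc (Lp.aestronglyMeasurable v).aemeasurable
  simp only [hrep]
  exact hu.le_liminf_of_quasiconvexOn
    (f := φ ∘ fun v : Lp (Vec k) 2 μ => ∫⁻ x, (g (v x) - c).toENNReal ∂μ)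
    ((quasiconvexOn_lintegral_comp hG.measurable
      fun x y a b ha hb hab => hconv.toENNReal_sub_le hc x y ha hb hab).monotone_comp hφ_mono)
    (hφ.comp_lowerSemicontinuous (lowerSemicontinuous_lintegral_comp hG) hφ_mono)

end IntegralFunctional

section Energy

variable {α : Type*} [MeasurableSpace α] {μ : Measure α} {k : ℕ} {g : Vec k → EReal}
  {Y : Type*} [NormedAddCommGroup Y] {S : Lp (Vec k) 2 μ → Y} {z : ℕ → Y} {z₀ : Y}

theorem tendsto_energy_of_tendsto (hz : Tendsto z atTop (𝓝 z₀)) (u : Lp (Vec k) 2 μ) :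
    Tendsto (fun i => energy μ S (z i) g u) atTop (𝓝 (energy μ S z₀ g u)) :=
  (EReal.continuousAt_add (Or.inl (EReal.coe_ne_top _)) (Or.inl (EReal.coe_ne_bot _))).tendsto.comp
    ((EReal.tendsto_coe.mpr (((tendsto_const_nhds.sub hz).norm.pow 2).const_mul _)).prodMk_nhds
      tendsto_const_nhds)

theorem WeakTendsto.energy_le_liminf [InnerProductSpace ℝ Y] [IsFiniteMeasure μ] {c : ℝ}
    (hconv : EConvexOn g) (hlsc : LowerSemicontinuous g) (hc : ∀ v, (c : EReal) ≤ g v)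
    {u : ℕ → Lp (Vec k) 2 μ} {l : Lp (Vec k) 2 μ} (hu : WeakTendsto u l)
    (hSu : WeakTendsto (fun i => S (u i)) (S l)) (hz : Tendsto z atTop (𝓝 z₀)) :
    energy μ S z₀ g l ≤ liminf (fun i => energy μ S (z i) g (u i)) atTop :=
  (add_le_add (hSu.sub_tendsto hz).half_norm_sq_le_liminf (hu.intG_le_liminf hconv hlsc hc)).trans
    EReal.le_liminf_add

end Energy

theorem gamma_convergence_target_perturbation_general
    {n m : ℕ}
    (Ω : Set (Vec n)) (hΩbdd : Bornology.IsBounded Ω)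
    {Y : Type*} [NormedAddCommGroup Y] [InnerProductSpace ℝ Y]
    (M : Finset (Vec m)) (g : Vec m → EReal)
    (hproper : EProper g) (hconv : EConvexOn g) (hlsc : LowerSemicontinuous g)
    (hdom : {v | g v ≠ ⊤} = convexHull ℝ (M : Set (Vec m)))
    (S : Lp (Vec m) 2 (volume.restrict Ω) → Y)
    (hS : ∀ (u : ℕ → Lp (Vec m) 2 (volume.restrict Ω)) (l : Lp (Vec m) 2 (volume.restrict Ω)),
      WeakTendsto u l → WeakTendsto (fun i => S (u i)) (S l))
    (z : ℕ → Y) (zbar : Y) (hz : Tendsto (fun i => ‖z i - zbar‖) atTop (nhds (0:ℝ))) :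
    -- (i) Γ-liminf inequality
    (∀ (u : ℕ → Lp (Vec m) 2 (volume.restrict Ω)) (l), WeakTendsto u l →
        energy (volume.restrict Ω) S zbar g l ≤
          Filter.liminf (fun i => energy (volume.restrict Ω) S (z i) g (u i)) atTop)
    -- (ii) existence of recovery sequences
    ∧ (∀ l : Lp (Vec m) 2 (volume.restrict Ω), ∃ u : ℕ → Lp (Vec m) 2 (volume.restrict Ω),
        WeakTendsto u l ∧
        Filter.limsup (fun i => energy (volume.restrict Ω) S (z i) g (u i)) atTop ≤
          energy (volume.restrict Ω) S zbar g l) := by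
  have : IsFiniteMeasure (volume.restrict Ω) :=
    isFiniteMeasure_restrict.mpr hΩbdd.measure_lt_top.ne
  obtain ⟨c, hc⟩ := hlsc.exists_coe_le hproper.2
    (hdom ▸ M.finite_toSet.isCompact_convexHull (𝕜 := ℝ))
  have hz' : Tendsto z atTop (𝓝 zbar) := tendsto_iff_norm_sub_tendsto_zero.mpr hz
  exact ⟨fun u l hu => hu.energy_le_liminf hconv hlsc hc (hS u l hu) hz',
    fun l => ⟨fun _ => l, fun _ => tendsto_const_nhds,
      (tendsto_energy_of_tendsto hz' l).limsup_eq.le⟩⟩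

/-- Γ-convergence of the objective under target perturbations:
if `z_n → z` strongly in `Y` and `S` is weak-to-weak continuous, then
`E^{z_n}` Γ-converges to `E^z` with respect to weak convergence in `U`. -/
theorem gamma_convergence_target_perturbation
    {n m : ℕ} (hm : 2 ≤ m)
    (Ω : Set (Vec n)) (hΩopen : IsOpen Ω) (hΩbdd : Bornology.IsBounded Ω)
    {Y : Type*} [NormedAddCommGroup Y] [InnerProductSpace ℝ Y] [CompleteSpace Y]
    (M : Finset (Vec m)) (g : Vec m → EReal)
    (hproper : EProper g) (hconv : EConvexOn g) (hlsc : LowerSemicontinuous g)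
    (hdom : {v | g v ≠ ⊤} = convexHull ℝ (M : Set (Vec m)))
    (S : Lp (Vec m) 2 (volume.restrict Ω) → Y)
    (hS : ∀ (u : ℕ → Lp (Vec m) 2 (volume.restrict Ω)) (l : Lp (Vec m) 2 (volume.restrict Ω)),
      WeakTendsto u l → WeakTendsto (fun i => S (u i)) (S l))
    (z : ℕ → Y) (zbar : Y) (hz : Tendsto (fun i => ‖z i - zbar‖) atTop (nhds (0:ℝ))) :
    -- (i) Γ-liminf inequality
    (∀ (u : ℕ → Lp (Vec m) 2 (volume.restrict Ω)) (l), WeakTendsto u l →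
        energy (volume.restrict Ω) S zbar g l ≤
          Filter.liminf (fun i => energy (volume.restrict Ω) S (z i) g (u i)) atTop)
    -- (ii) existence of recovery sequences
    ∧ (∀ l : Lp (Vec m) 2 (volume.restrict Ω), ∃ u : ℕ → Lp (Vec m) 2 (volume.restrict Ω),
        WeakTendsto u l ∧
        Filter.limsup (fun i => energy (volume.restrict Ω) S (z i) g (u i)) atTop ≤
          energy (volume.restrict Ω) S zbar g l) :=
  gamma_convergence_target_perturbation_general Ω hΩbdd M g hproper hconv hlsc hdom S hS z zbar hz
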